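/- Let A be a finite abelian group with a quadratic function q, and let (B,β) be a Schellekens pair for (A,q). Then Γ(B,β) = {(a, a⁻¹b) | a ∈ A, b ∈ B, σ(c,a) = β(c,b) for all c ∈ B} is a subgroup of A × A, and it is isotropic for the quadratic function q×q⁻¹, i.e. q(x)q(y)⁻¹ = 1 for every (x,y) ∈ Γ(B,β). -/

import Mathlib

/-- The bicharacter `σ(a,b) = q(ab) q(a)⁻¹ q(b)⁻¹` associated to `q`. -/
def qSigma {A : Type*} [CommGroup A] (q : A → ℂˣ) (a b : A) : ℂˣ :=
  q (a * b) * (q a)⁻¹ * (q b)⁻¹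

/-- `q` is a quadratic function: `q(a⁻¹) = q(a)` and the associated `σ` is
multiplicative in each argument. -/
def IsQuadratic {A : Type*} [CommGroup A] (q : A → ℂˣ) : Prop :=
  (∀ a : A, q a⁻¹ = q a) ∧
  (∀ a b c : A, qSigma q (a * b) c = qSigma q a c * qSigma q b c) ∧
  (∀ a b c : A, qSigma q a (b * c) = qSigma q a b * qSigma q a c)

/-- `q` is nondegenerate: for every `a ≠ 1` the homomorphism `σ(a,−)` is nontrivial. -/
def IsNondeg {A : Type*} [CommGroup A] (q : A → ℂˣ) : Prop :=
  ∀ a : A, a ≠ 1 → ∃ b : A, qSigma q a b ≠ 1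

/-- `(B, β)` is a Schellekens pair for `(A, q)`: `β` is symmetric, multiplicative
in each argument, and `β(b,b) = q(b)` on the subgroup `B`. -/
def IsSchellekens {A : Type*} [CommGroup A] (q : A → ℂˣ) (B : Subgroup A)
    (β : B → B → ℂˣ) : Prop :=
  (∀ b c : B, β b c = β c b) ∧
  (∀ b c d : B, β (b * c) d = β b d * β c d) ∧
  (∀ b c d : B, β b (c * d) = β b c * β b d) ∧
  (∀ b : B, β b b = q (b : A))

/-- `Γ(B,β) = {(a, a⁻¹ b) | a ∈ A, b ∈ B, σ(c,a) = β(c,b) ∀ c ∈ B}` as a subset of `A × A`. -/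
def GammaSet {A : Type*} [CommGroup A] (q : A → ℂˣ) (B : Subgroup A)
    (β : B → B → ℂˣ) : Set (A × A) :=
  {z | ∃ b : B, z.2 = z.1⁻¹ * (b : A) ∧ ∀ c : B, qSigma q (c : A) z.1 = β c b}

/-- The bicharacter `τ((a,b),(c,d)) = σ(a,c) σ(b,d)⁻¹` on `A × A`
associated to the quadratic function `q × q⁻¹`. -/
def qTau {A : Type*} [CommGroup A] (q : A → ℂˣ) (z w : A × A) : ℂˣ :=
  qSigma q z.1 w.1 * (qSigma q z.2 w.2)⁻¹

section

variable {A : Type*} [CommGroup A] {q : A → ℂˣ}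

theorem qSigma_comm (q : A → ℂˣ) (a b : A) : qSigma q a b = qSigma q b a := by
  rw [qSigma, qSigma, mul_comm a b, mul_right_comm]

theorem q_mul_eq_qSigma_mul (q : A → ℂˣ) (a b : A) : q (a * b) = qSigma q a b * q a * q b := by
  rw [qSigma, mul_right_comm _ (q b)⁻¹, inv_mul_cancel_right, inv_mul_cancel_right]

namespace IsQuadratic

variable (hq : IsQuadratic q)
include hq

theorem qSigma_one_right (a : A) : qSigma q a 1 = 1 :=
  map_one (MonoidHom.mk' _ (hq.2.2 a))

theorem qSigma_mul_right (a b c : A) : qSigma q a (b * c) = qSigma q a b * qSigma q a c :=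
  hq.2.2 a b c

theorem qSigma_inv_right (a b : A) : qSigma q a b⁻¹ = (qSigma q a b)⁻¹ :=
  map_inv (MonoidHom.mk' _ (hq.2.2 a)) b

end IsQuadratic

namespace IsSchellekens

variable {B : Subgroup A} {β : B → B → ℂˣ} (hβ : IsSchellekens q B β)
include hβ

theorem one_right (c : B) : β c 1 = 1 :=
  map_one (MonoidHom.mk' _ (hβ.2.2.1 c))

theorem mul_right (c b d : B) : β c (b * d) = β c b * β c d :=
  hβ.2.2.1 c b d

theorem inv_right (c b : B) : β c b⁻¹ = (β c b)⁻¹ :=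
  map_inv (MonoidHom.mk' _ (hβ.2.2.1 c)) b

def gammaSubgroup (hq : IsQuadratic q) : Subgroup (A × A) where
  carrier := GammaSet q B β
  one_mem' := ⟨1, by simp, fun c => by rw [Prod.fst_one, hq.qSigma_one_right, hβ.one_right]⟩
  mul_mem' := by
    rintro x y ⟨b, hxb, hx⟩ ⟨d, hyd, hy⟩
    refine ⟨b * d, ?_, fun c => ?_⟩
    · rw [Prod.snd_mul, Prod.fst_mul, hxb, hyd, Subgroup.coe_mul, mul_inv, mul_mul_mul_comm]
    · rw [Prod.fst_mul, hq.qSigma_mul_right, hx, hy, hβ.mul_right]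
  inv_mem' := by
    rintro x ⟨b, hxb, hx⟩
    refine ⟨b⁻¹, ?_, fun c => ?_⟩
    · rw [Prod.snd_inv, Prod.fst_inv, hxb, Subgroup.coe_inv, mul_inv, inv_inv]
    · rw [Prod.fst_inv, hq.qSigma_inv_right, hx, hβ.inv_right]

/-- For `(a, a⁻¹ b) ∈ Γ(B, β)` the defining relation at `c = b` gives `σ(b, a) = β(b, b) = q(b)`,
which is exactly what makes `q(a⁻¹ b) = σ(b, a)⁻¹ q(a) q(b)` collapse to `q(a)`. -/
theorem q_snd_eq_q_fst (hq : IsQuadratic q) {z : A × A} (hz : z ∈ GammaSet q B β) :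
    q z.2 = q z.1 := by
  obtain ⟨b, hzb, hσ⟩ := hz
  have hσb : qSigma q (b : A) z.1 = q b := by rw [hσ b, hβ.2.2.2]
  rw [hzb, q_mul_eq_qSigma_mul q, qSigma_comm, hq.qSigma_inv_right, hσb, hq.1,
    mul_right_comm, inv_mul_cancel, one_mul]

end IsSchellekens

end

theorem gammaSet_subgroup_and_isotropic_general {A : Type*} [CommGroup A]
    (q : A → ℂˣ) (hq : IsQuadratic q) (B : Subgroup A) (β : B → B → ℂˣ)
    (hβ : IsSchellekens q B β) :
    ∃ Γ : Subgroup (A × A), (Γ : Set (A × A)) = GammaSet q B β ∧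
      ∀ z ∈ GammaSet q B β, q z.1 * (q z.2)⁻¹ = 1 :=
  ⟨hβ.gammaSubgroup hq, rfl, fun _ hz => by rw [hβ.q_snd_eq_q_fst hq hz, mul_inv_cancel]⟩

/-- `Γ(B,β)` is a subgroup of `A × A`, and it is isotropic for `q × q⁻¹`. -/
theorem gammaSet_subgroup_and_isotropic {A : Type*} [CommGroup A] [Fintype A]
    (q : A → ℂˣ) (hq : IsQuadratic q) (B : Subgroup A) (β : B → B → ℂˣ)
    (hβ : IsSchellekens q B β) :
    ∃ Γ : Subgroup (A × A), (Γ : Set (A × A)) = GammaSet q B β ∧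
      ∀ z ∈ GammaSet q B β, q z.1 * (q z.2)⁻¹ = 1 :=
  gammaSet_subgroup_and_isotropic_general q hq B β hβ
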